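/- Let N, D be positive natural numbers, let S ∈ ℝ^{N×D} have orthonormal columns, and set Q := SSᵀ. Let h̃₀ ∈ ℝ^D and h₀ := S h̃₀, let s ∈ ℝ^N with s̃ := Sᵀs ≠ 0, let c > 0, and define H⁻ := { h ∈ ℝ^N : ⟨h − h₀, s⟩ + c ≤ 0 } and H̃⁻ := { h̃ ∈ ℝ^D : ⟨h̃ − h̃₀, s̃⟩ + c ≤ 0 }. Then the metric projection of h₀ onto H⁻ ∩ R(S) equals S applied to the metric projection of h̃₀ onto H̃⁻; that is, P_{H⁻ ∩ R(S)}(h₀) = S · P_{H̃⁻}(h̃₀). -/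

import Mathlib

open Matrix
open scoped RealInnerProductSpace

/-! Since `SᵀS = 1`, the map `y ↦ S y` is an isometry of `ℝ^D` onto `R(S)`, and
`⟪S y - S h̃₀, s⟫ = ⟪y - h̃₀, Sᵀ s⟫`. So it carries `H̃⁻` onto `H⁻ ∩ R(S)` and the distance to
`h̃₀` onto the distance to `h₀`, hence minimizers onto minimizers. -/

namespace Matrix

variable {𝕜 : Type*} [RCLike 𝕜] {m n : Type*} [Fintype m] [Fintype n] [DecidableEq m]
  [DecidableEq n]

theorem inner_toEuclideanLin_left (A : Matrix m n 𝕜) (u : EuclideanSpace 𝕜 n)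
    (v : EuclideanSpace 𝕜 m) :
    inner 𝕜 (toEuclideanLin A u) v = inner 𝕜 u (toEuclideanLin Aᴴ v) := by
  rw [toEuclideanLin_conjTranspose_eq_adjoint, LinearMap.adjoint_inner_right]

theorem norm_toEuclideanLin_of_conjTranspose_mul_self {A : Matrix m n 𝕜} (hA : Aᴴ * A = 1)
    (u : EuclideanSpace 𝕜 n) : ‖toEuclideanLin A u‖ = ‖u‖ := by
  have h : inner 𝕜 (toEuclideanLin A u) (toEuclideanLin A u) = inner 𝕜 u u := by
    rw [inner_toEuclideanLin_left, ← LinearMap.comp_apply, ← toLpLin_mul_same, hA, toLpLin_one,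
      LinearMap.id_apply]
  simpa using congrArg RCLike.re h

end Matrix

theorem stmt_16_general (N D : ℕ)
    (S : Matrix (Fin N) (Fin D) ℝ) (hS : Sᵀ * S = 1)
    (ht₀ : EuclideanSpace ℝ (Fin D))
    (h₀ : EuclideanSpace ℝ (Fin N)) (hh₀ : h₀ = toEuclideanLin S ht₀)
    (s : EuclideanSpace ℝ (Fin N))
    (st : EuclideanSpace ℝ (Fin D)) (hst : st = toEuclideanLin Sᵀ s)
    (c : ℝ)
    (pt : EuclideanSpace ℝ (Fin D))
    (hpt_mem : ⟪pt - ht₀, st⟫ + c ≤ 0)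
    (hpt_min : ∀ xt : EuclideanSpace ℝ (Fin D), ⟪xt - ht₀, st⟫ + c ≤ 0 →
      ‖ht₀ - pt‖ ≤ ‖ht₀ - xt‖) :
    (⟪toEuclideanLin S pt - h₀, s⟫ + c ≤ 0) ∧
    (∃ z : EuclideanSpace ℝ (Fin D), toEuclideanLin S z = toEuclideanLin S pt) ∧
    (∀ x : EuclideanSpace ℝ (Fin N), ⟪x - h₀, s⟫ + c ≤ 0 →
      (∃ z : EuclideanSpace ℝ (Fin D), toEuclideanLin S z = x) →
      ‖h₀ - toEuclideanLin S pt‖ ≤ ‖h₀ - x‖) := by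
  have hS' : Sᴴ * S = 1 := by rwa [conjTranspose_eq_transpose_of_trivial]
  have inner_pullback (y : EuclideanSpace ℝ (Fin D)) :
      ⟪toEuclideanLin S y - h₀, s⟫ = ⟪y - ht₀, st⟫ := by
    rw [hh₀, ← map_sub, inner_toEuclideanLin_left, conjTranspose_eq_transpose_of_trivial, hst]
  have dist_pullback (y : EuclideanSpace ℝ (Fin D)) :
      ‖h₀ - toEuclideanLin S y‖ = ‖ht₀ - y‖ := by
    rw [hh₀, ← map_sub, norm_toEuclideanLin_of_conjTranspose_mul_self hS']
  refine ⟨inner_pullback pt ▸ hpt_mem, ⟨pt, rfl⟩, ?_⟩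
  rintro _ hx ⟨z, rfl⟩
  rw [dist_pullback, dist_pullback]
  exact hpt_min z (inner_pullback z ▸ hx)

/-- With `h₀ := S h̃₀`, `s̃ := Sᵀs ≠ 0`, `c > 0`,
`H⁻ := {h ∈ ℝ^N : ⟨h − h₀, s⟩ + c ≤ 0}` and `H̃⁻ := {h̃ ∈ ℝ^D : ⟨h̃ − h̃₀, s̃⟩ + c ≤ 0}`,
the metric projection of `h₀` onto `H⁻ ∩ R(S)` equals `S` applied to the metric
projection of `h̃₀` onto `H̃⁻`: if `pt` is the metric projection of `h̃₀` onto `H̃⁻`,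
then `S pt` is the metric projection of `h₀` onto `H⁻ ∩ R(S)`. -/
theorem stmt_16 (N D : ℕ) (hN : 0 < N) (hD : 0 < D)
    (S : Matrix (Fin N) (Fin D) ℝ) (hS : Sᵀ * S = 1)
    (ht₀ : EuclideanSpace ℝ (Fin D))
    (h₀ : EuclideanSpace ℝ (Fin N)) (hh₀ : h₀ = toEuclideanLin S ht₀)
    (s : EuclideanSpace ℝ (Fin N))
    (st : EuclideanSpace ℝ (Fin D)) (hst : st = toEuclideanLin Sᵀ s)
    (hstne : st ≠ 0)
    (c : ℝ) (hc : 0 < c)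
    (pt : EuclideanSpace ℝ (Fin D))
    (hpt_mem : ⟪pt - ht₀, st⟫ + c ≤ 0)
    (hpt_min : ∀ xt : EuclideanSpace ℝ (Fin D), ⟪xt - ht₀, st⟫ + c ≤ 0 →
      ‖ht₀ - pt‖ ≤ ‖ht₀ - xt‖) :
    (⟪toEuclideanLin S pt - h₀, s⟫ + c ≤ 0) ∧
    (∃ z : EuclideanSpace ℝ (Fin D), toEuclideanLin S z = toEuclideanLin S pt) ∧
    (∀ x : EuclideanSpace ℝ (Fin N), ⟪x - h₀, s⟫ + c ≤ 0 →
      (∃ z : EuclideanSpace ℝ (Fin D), toEuclideanLin S z = x) →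
      ‖h₀ - toEuclideanLin S pt‖ ≤ ‖h₀ - x‖) :=
  stmt_16_general N D S hS ht₀ h₀ hh₀ s st hst c pt hpt_mem hpt_min
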